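/- Let V be a finite nonempty type and let P be an X-set property on finite subsets of V. The automorphism group of the P-TAR graph is generated by the set consisting of (i) all automorphisms of the form ν_R : S ↦ S ⊖ R where R ⊆ V is P-irrelevant, together with (ii) all automorphisms induced by a bijection ψ : V → V that maps minimal P-sets to minimal P-sets (acting on a P-set S by taking its image ψ(S)). That is, the subgroup generated by these automorphisms is the whole automorphism group of the P-TAR graph. -/

import Mathlib

/-- The TAR (token addition/removal) graph of a predicate `P` on finite subsets of `V`:
vertices are the `P`-sets, two `P`-sets being adjacent iff their symmetric difference
has exactly one element. -/
def tarGraph {V : Type*} [DecidableEq V] (P : Finset V → Prop) :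
    SimpleGraph {S : Finset V // P S} where
  Adj S T := (symmDiff S.1 T.1).card = 1
  symm := ⟨fun S T h => by show (symmDiff T.1 S.1).card = 1; rwa [symmDiff_comm]⟩
  loopless := ⟨fun S h => by simp [symmDiff_self] at h⟩

/-- `S` is a minimal `P`-set: `S` is a `P`-set and no proper subset of `S` is a `P`-set. -/
def IsMinimalPSet {V : Type*} (P : Finset V → Prop) (S : Finset V) : Prop :=
  P S ∧ ∀ T : Finset V, T ⊂ S → ¬ P T

/-- `R` is `P`-irrelevant: no minimal `P`-set contains any vertex of `R`. -/
def IsIrrelevant {V : Type*} (P : Finset V → Prop) (R : Finset V) : Prop :=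
  ∀ S : Finset V, IsMinimalPSet P S → ∀ v ∈ R, v ∉ S

/-!
Every graph homomorphism between TAR graphs of upward-closed families is 1-Lipschitz for the
distance `#(S ∆ T)`, since two `P`-sets are joined by a path of length `#(S ∆ T)`; hence every
automorphism `φ` is a Hamming isometry. As `univ` and all its neighbours `univ \ {v}` are
`P`-sets, such an isometry has the form `S ↦ σ(S ∆ R)`. Transporting `P` along `φ` gives
`P (σ X) ↔ P (X ∆ R)`, and since both sides are upward closed in `X`, every element of `R` can be
removed from any `P`-set: `R` is irrelevant. Therefore `φ` is `S ↦ σ S` composed with `ν_R`.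
-/

open Finset
open scoped symmDiff

namespace Finset

variable {α : Type*} [DecidableEq α]

theorem card_symmDiff_le_add (s t u : Finset α) : #(s ∆ u) ≤ #(s ∆ t) + #(t ∆ u) :=
  (card_le_card (symmDiff_triangle s t u)).trans (card_union_le _ _)

theorem symmDiff_singleton_of_mem {s : Finset α} {a : α} (h : a ∈ s) : s ∆ {a} = s.erase a := by
  rw [symmDiff_of_ge (singleton_subset_iff.2 h), sdiff_singleton_eq_erase]

theorem symmDiff_singleton_of_notMem {s : Finset α} {a : α} (h : a ∉ s) :
    s ∆ {a} = insert a s := by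
  rw [symmDiff_eq_union (disjoint_singleton_right.2 h), union_comm, insert_eq]

theorem mem_iff_card_symmDiff_singleton_lt {s : Finset α} {a : α} :
    a ∈ s ↔ #(s ∆ {a}) < #s := by
  by_cases h : a ∈ s
  · simpa [h, symmDiff_singleton_of_mem h] using card_erase_lt_of_mem h
  · simp [h, symmDiff_singleton_of_notMem h, card_insert_of_notMem h]

end Finset

section

variable {V : Type*} [DecidableEq V] {P : Finset V → Prop}

theorem tarGraph.exists_adj_card_symmDiff_add_one (hP : Monotone P) {S T : {S // P S}}
    (hST : S ≠ T) : ∃ S', (tarGraph P).Adj S S' ∧ #(S'.1 ∆ T.1) + 1 = #(S.1 ∆ T.1) := by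
  -- Flipping one element of `S ∆ T` keeps a superset of `S` or of `T`.
  obtain ⟨x, hx, hPx⟩ : ∃ x ∈ S.1 ∆ T.1, P (S.1 ∆ {x}) := by
    by_cases hTS : T.1 ⊆ S.1
    · obtain ⟨x, hx⟩ := sdiff_nonempty.2 fun h => hST (Subtype.ext (h.antisymm hTS))
      rw [mem_sdiff] at hx
      refine ⟨x, mem_symmDiff.2 (Or.inl hx), hP ?_ T.2⟩
      rw [symmDiff_singleton_of_mem hx.1]
      exact fun y hy => mem_erase.2 ⟨by rintro rfl; exact hx.2 hy, hTS hy⟩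
    · obtain ⟨x, hxT, hxS⟩ := not_subset.1 hTS
      refine ⟨x, mem_symmDiff.2 (Or.inr ⟨hxT, hxS⟩), hP ?_ S.2⟩
      rw [symmDiff_singleton_of_notMem hxS]
      exact subset_insert _ _
  refine ⟨⟨_, hPx⟩, ?_, ?_⟩
  · show #(S.1 ∆ (S.1 ∆ {x})) = 1
    rw [symmDiff_symmDiff_cancel_left, card_singleton]
  · show #(S.1 ∆ {x} ∆ T.1) + 1 = _
    rw [symmDiff_right_comm, symmDiff_singleton_of_mem hx, card_erase_add_one hx]

theorem tarGraph.card_symmDiff_map_le {Q : Finset V → Prop} (hP : Monotone P)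
    (f : tarGraph P →g tarGraph Q) (S T : {S // P S}) :
    #((f S).1 ∆ (f T).1) ≤ #(S.1 ∆ T.1) := by
  induction h : #(S.1 ∆ T.1) generalizing S with
  | zero =>
    rw [card_eq_zero, symmDiff_eq_empty] at h
    simp [Subtype.ext h]
  | succ n ih =>
    obtain ⟨S', hadj, hS'⟩ :=
      exists_adj_card_symmDiff_add_one hP (S := S) (T := T) (by rintro rfl; simp at h)
    calc #((f S).1 ∆ (f T).1)
        ≤ #((f S).1 ∆ (f S').1) + #((f S').1 ∆ (f T).1) := card_symmDiff_le_add _ _ _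
      _ ≤ 1 + n := add_le_add (f.map_adj hadj).le (ih S' (by omega))
      _ = n + 1 := add_comm 1 n

theorem tarGraph.card_symmDiff_iso {Q : Finset V → Prop} (hP : Monotone P) (hQ : Monotone Q)
    (φ : tarGraph P ≃g tarGraph Q) (S T : {S // P S}) :
    #((φ S).1 ∆ (φ T).1) = #(S.1 ∆ T.1) :=
  (card_symmDiff_map_le hP φ.toHom S T).antisymm <| by
    simpa using card_symmDiff_map_le hQ φ.symm.toHom (φ S) (φ T)

theorem exists_perm_of_card_symmDiff_eq [Finite V] {F : Finset V → Prop}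
    (g : {S // F S} → Finset V) (hg : ∀ S T, #(g S ∆ g T) = #(S.1 ∆ T.1))
    {O : Finset V} (hO : F O) (hnbr : ∀ v, F (O ∆ {v})) :
    ∃ σ : Equiv.Perm V, ∃ R : Finset V, ∀ S, g S = (S.1 ∆ R).image σ := by
  let O' : {S // F S} := ⟨O, hO⟩
  let N : V → {S // F S} := fun v => ⟨O ∆ {v}, hnbr v⟩
  have hN : ∀ v, #(g O' ∆ g (N v)) = 1 := fun v => by
    rw [hg]; simp [N, O', symmDiff_symmDiff_cancel_left]
  choose f hf using fun v => card_eq_one.1 (hN v)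
  have hf_inj : f.Injective := by
    intro v w hvw
    have h : g (N v) = g (N w) := by rw [← symmDiff_right_inj, hf, hf, hvw]
    have h0 := hg (N v) (N w)
    rw [h, symmDiff_self, bot_eq_empty, card_empty, eq_comm, card_eq_zero, symmDiff_eq_empty] at h0
    simpa [N] using h0
  let σ := Equiv.ofBijective f (Finite.injective_iff_bijective.1 hf_inj)
  -- `f v ∈ g S ∆ g O` iff flipping `f v` brings `g S` closer to `g O`, and `g` transports this
  -- to `v ∈ S ∆ O`.
  have hmem : ∀ S v, f v ∈ g S ∆ g O' ↔ v ∈ S.1 ∆ O := fun S v => by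
    rw [mem_iff_card_symmDiff_singleton_lt, mem_iff_card_symmDiff_singleton_lt, ← hf v,
      symmDiff_assoc, symmDiff_symmDiff_cancel_left, symmDiff_assoc, hg, hg]
  have himage : ∀ S, g S ∆ g O' = (S.1 ∆ O).image σ := fun S => by
    ext y
    obtain ⟨v, rfl⟩ := σ.surjective y
    simp [σ, hmem, hf_inj.eq_iff]
  refine ⟨σ, O ∆ (g O').image σ.symm, fun S => ?_⟩
  rw [← symmDiff_assoc, image_symmDiff _ _ σ.injective, ← himage, image_image]
  simp

theorem image_iff_symmDiff_of_equiv (φ : {S // P S} ≃ {S // P S}) {σ : Equiv.Perm V}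
    {R : Finset V} (hφ : ∀ S, (φ S).1 = (S.1 ∆ R).image σ) (X : Finset V) :
    P (X.image σ) ↔ P (X ∆ R) := by
  refine ⟨fun hX => ?_, fun hX => ?_⟩
  · have h := hφ (φ.symm ⟨_, hX⟩)
    rw [φ.apply_symm_apply, image_injective σ.injective |>.eq_iff] at h
    rw [h, symmDiff_symmDiff_cancel_right]
    exact (φ.symm _).2
  · simpa [hφ] using (φ ⟨_, hX⟩).2

theorem erase_of_iff_symmDiff {Q : Finset V → Prop} (hQ : Monotone Q) {R : Finset V}
    (hQP : ∀ X, Q X ↔ P (X ∆ R)) {S : Finset V} (hS : P S) {w : V} (hw : w ∈ R) :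
    P (S.erase w) := by
  by_cases hwS : w ∈ S
  · have h : S.erase w = insert w (S ∆ R) ∆ R := by
      ext x; by_cases x = w <;> by_cases x ∈ R <;> simp_all [mem_symmDiff]
    rw [h, ← hQP]
    exact hQ (subset_insert _ _) ((hQP _).2 (by rwa [symmDiff_symmDiff_cancel_right]))
  · rwa [erase_eq_of_notMem hwS]

theorem IsIrrelevant.of_forall_erase {R : Finset V} (h : ∀ S, P S → ∀ w ∈ R, P (S.erase w)) :
    IsIrrelevant P R :=
  fun M hM w hw hwM => hM.2 _ (erase_ssubset hwM) (h M hM.1 w hw)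

theorem IsIrrelevant.symmDiff_of (hP : Monotone P) {R : Finset V} (hR : IsIrrelevant P R)
    {S : Finset V} (hS : P S) : P (S ∆ R) := by
  obtain ⟨M, hMS, hM⟩ := exists_minimal_le_of_wellFoundedLT P S hS
  have hMR : ∀ x ∈ M, x ∉ R := fun x hx hxR =>
    hR M ⟨hM.prop, fun T hT => hM.not_prop_of_lt hT⟩ x hxR hx
  exact hP (fun x hx => mem_symmDiff.2 (Or.inl ⟨hMS hx, hMR x hx⟩)) hM.prop

theorem IsIrrelevant.symmDiff_iff (hP : Monotone P) {R : Finset V} (hR : IsIrrelevant P R)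
    (S : Finset V) : P (S ∆ R) ↔ P S :=
  ⟨fun h => by simpa using hR.symmDiff_of hP h, hR.symmDiff_of hP⟩

theorem IsMinimalPSet.image {σ : Equiv.Perm V} (hσ : ∀ X, P (X.image σ) ↔ P X)
    {S : Finset V} (hS : IsMinimalPSet P S) : IsMinimalPSet P (S.image σ) := by
  refine ⟨(hσ S).2 hS.1, fun T hT hPT => hS.2 (T.image σ.symm) ?_ ((hσ _).1 ?_)⟩
  · rwa [← image_ssubset_image σ.injective, image_image, σ.self_comp_symm, image_id]
  · rwa [image_image, σ.self_comp_symm, image_id]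

def tarGraph.isoOfIsometry (e : Finset V ≃ Finset V) (he : ∀ S T, #(e S ∆ e T) = #(S ∆ T))
    (hPe : ∀ S, P (e S) ↔ P S) : tarGraph P ≃g tarGraph P where
  toEquiv := e.subtypeEquiv fun S => (hPe S).symm
  map_rel_iff' {S T} := by
    show #(e S.1 ∆ e T.1) = 1 ↔ #(S.1 ∆ T.1) = 1
    rw [he]

def tarGraph.symmDiffIso (hP : Monotone P) {R : Finset V} (hR : IsIrrelevant P R) :
    tarGraph P ≃g tarGraph P :=
  isoOfIsometry (symmDiff_left_involutive R).toPerm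
    (fun S T => by
      simp only [Function.Involutive.coe_toPerm]
      rw [symmDiff_symmDiff_symmDiff_comm, symmDiff_self, symmDiff_bot])
    (hR.symmDiff_iff hP)

theorem tarGraph.symmDiffIso_apply (hP : Monotone P) {R : Finset V} (hR : IsIrrelevant P R)
    (S : {S // P S}) : (symmDiffIso hP hR S).1 = S.1 ∆ R :=
  rfl

def tarGraph.imageIso {σ : Equiv.Perm V} (hσ : ∀ X, P (X.image σ) ↔ P X) :
    tarGraph P ≃g tarGraph P :=
  isoOfIsometry σ.finsetCongr
    (fun S T => by
      simp only [Equiv.finsetCongr_apply, map_eq_image, Equiv.coe_toEmbedding]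
      rw [← image_symmDiff _ _ σ.injective, card_image_of_injective _ σ.injective])
    (fun X => by simpa [map_eq_image] using hσ X)

theorem tarGraph.imageIso_apply {σ : Equiv.Perm V} (hσ : ∀ X, P (X.image σ) ↔ P X)
    (S : {S // P S}) : (imageIso hσ S).1 = S.1.image σ :=
  map_eq_image _ _

end

theorem tar_automorphism_group_generated_general {V : Type*}
    [Fintype V] [DecidableEq V] [Nonempty V]
    (P : Finset V → Prop)
    (hP1 : ∀ S T : Finset V, P S → S ⊆ T → P T)
    (hP3 : ∀ v : V, P (Finset.univ \ {v})) :
    Subgroup.closure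
      {φ : tarGraph P ≃g tarGraph P |
        (∃ R : Finset V, IsIrrelevant P R ∧
          ∀ S : {S : Finset V // P S}, (φ S).1 = symmDiff S.1 R) ∨
        (∃ ψ : Equiv.Perm V,
          (∀ S : Finset V, IsMinimalPSet P S → IsMinimalPSet P (S.image ψ)) ∧
          ∀ S : {S : Finset V // P S}, (φ S).1 = S.1.image ψ)} = ⊤ := by
  have hP : Monotone P := fun S T hST hS => hP1 S T hS hST
  have hPuniv : P univ := hP (subset_univ _) (hP3 (Classical.arbitrary V))
  refine (Subgroup.eq_top_iff' _).2 fun φ => ?_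
  obtain ⟨σ, R, hφ⟩ := exists_perm_of_card_symmDiff_eq (fun S => (φ S).1)
    (tarGraph.card_symmDiff_iso hP hP φ) hPuniv
    (fun v => by rw [symmDiff_of_ge (subset_univ _)]; exact hP3 v)
  have hσR := image_iff_symmDiff_of_equiv φ.toEquiv hφ
  have hR : IsIrrelevant P R := .of_forall_erase fun S hS w hw =>
    erase_of_iff_symmDiff (fun X Y hXY => hP (image_subset_image hXY)) hσR hS hw
  have hσ : ∀ X, P (X.image σ) ↔ P X := fun X => (hσR X).trans (hR.symmDiff_iff hP X)
  have hφ_eq : φ = tarGraph.imageIso hσ * tarGraph.symmDiffIso hP hR :=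
    RelIso.ext fun S => Subtype.ext <|
      (hφ S).trans (tarGraph.imageIso_apply hσ (tarGraph.symmDiffIso hP hR S)).symm
  rw [hφ_eq]
  exact mul_mem
    (Subgroup.subset_closure (Or.inr ⟨σ, fun S hS => hS.image hσ, tarGraph.imageIso_apply hσ⟩))
    (Subgroup.subset_closure (Or.inl ⟨R, hR, tarGraph.symmDiffIso_apply hP hR⟩))

/-- For an X-set property `P` on a nonempty finite type `V`, the automorphism group of
the `P`-TAR graph is generated by the automorphisms of the form `ν_R : S ↦ S ⊖ R` for
`P`-irrelevant `R`, together with the automorphisms induced by bijections `ψ : V → V`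
mapping minimal `P`-sets to minimal `P`-sets. -/
theorem tar_automorphism_group_generated {V : Type*}
    [Fintype V] [DecidableEq V] [Nonempty V]
    (P : Finset V → Prop)
    (hP1 : ∀ S T : Finset V, P S → S ⊆ T → P T)
    (hP2 : ¬ P ∅)
    (hP3 : ∀ v : V, P (Finset.univ \ {v})) :
    Subgroup.closure
      {φ : tarGraph P ≃g tarGraph P |
        (∃ R : Finset V, IsIrrelevant P R ∧
          ∀ S : {S : Finset V // P S}, (φ S).1 = symmDiff S.1 R) ∨
        (∃ ψ : Equiv.Perm V,
          (∀ S : Finset V, IsMinimalPSet P S → IsMinimalPSet P (S.image ψ)) ∧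
          ∀ S : {S : Finset V // P S}, (φ S).1 = S.1.image ψ)} = ⊤ :=
  tar_automorphism_group_generated_general P hP1 hP3
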